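/- arXiv:2209.11443 — 4 statements merged into one kernel-verified Lean document; each statement's English description precedes it below -/
import Mathlib

section
/- Let p be a prime, k, ℓ ≥ 1 integers, ζ a primitive complex p^k-th root of unity, and let A be a matrix with entries in T_ℓ^k = ℤ[ζ][z]/⟨(z−1)^ℓ⟩. Then rank_{ℚ(ζ)}(A) ≥ rank_{F_p}(ψ_{p^k}(A)), where ψ_{p^k}(A) is the matrix over F_p[z]/⟨(z−1)^ℓ⟩ obtained by applying ψ_{p^k} entrywise. -/
/-- The ring `R[z]/⟨(z−1)^ℓ⟩`. -/
abbrev Tq (R : Type*) [CommRing R] (ℓ : ℕ) : Type _ :=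
  Polynomial R ⧸ Ideal.span {((Polynomial.X - 1) ^ ℓ : Polynomial R)}

/-- The quotient map `R[z] → R[z]/⟨(z−1)^ℓ⟩`. -/
noncomputable def TqMk (R : Type*) [CommRing R] (ℓ : ℕ) : Polynomial R →+* Tq R ℓ :=
  Ideal.Quotient.mk _

/-- The `F`-rank of a matrix with entries in an `F`-module (e.g. `F[z]/⟨f(z)⟩`):
the maximal number of `F`-linearly independent columns, i.e. the dimension of the
`F`-span of its columns. -/
noncomputable def colRank (F : Type*) [DivisionRing F] {V : Type*} [AddCommGroup V]
    [Module F V] {I J : Type*} (M : Matrix I J V) : ℕ :=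
  Module.finrank F (Submodule.span F (Set.range fun j => fun i => M i j))

/-!
If the reductions `ψ(Aⱼ)` of some columns are independent over `𝔽_p`, the columns `φ(Aⱼ)` are
independent over `ℚ(ζ)`. As `ℚ(ζ)` is the fraction field of `ℤ[ζ]` and `φ` is injective, it
suffices that the columns `Aⱼ` are independent over `ℤ[ζ]`. On constants `ψ` is the map
`ℤ[ζ] → 𝔽_p`, `ζ ↦ 1`, whose kernel is the principal ideal `(ζ - 1)`; it contains `p` because
`ζ - 1 ∣ ζ ^ p ^ (k - 1) - 1 ∣ p`. A relation `∑ cⱼ Aⱼ = 0` reduces to a relation among the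
`ψ(Aⱼ)`, so `ζ - 1` divides every `cⱼ`; dividing it out and repeating puts the `cⱼ` in every
power of `(ζ - 1)`, and Krull's intersection theorem in the Noetherian domain `ℤ[ζ]` makes them
vanish.
-/

open Polynomial Module

section Residue
variable {R k M W : Type*} [CommRing R] [IsDomain R] [IsNoetherianRing R] [Field k]
  [AddCommGroup M] [Module R M] [Module.IsTorsionFree R M] [AddCommGroup W] [Module k W]

theorem LinearIndependent.of_comp_of_ker_eq_span_singleton {ι : Type*} {f : R →+* k} {π : R}
    (hf : RingHom.ker f = Ideal.span {π}) (ψ : M →ₛₗ[f] W) {v : ι → M}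
    (hv : LinearIndependent k (ψ ∘ v)) : LinearIndependent R v := by
  rw [linearIndependent_iff'] at hv ⊢
  have mem_pow : ∀ n : ℕ, ∀ (s : Finset ι) (g : ι → R), ∑ i ∈ s, g i • v i = 0 →
      ∀ i ∈ s, g i ∈ Ideal.span {π} ^ n := by
    intro n
    induction n with
    | zero => simp
    | succ n ih =>
      intro s g hg
      have hdvd : ∀ i ∈ s, ∃ h, h * π = g i := by
        intro i hi
        rw [← Ideal.mem_span_singleton', ← hf, RingHom.mem_ker]
        refine hv s (fun i => f (g i)) ?_ i hi
        simpa [map_sum, map_smulₛₗ] using congrArg ψ hg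
      choose! h hh using hdvd
      rcases eq_or_ne π 0 with rfl | hπ
      · intro i hi
        simp [← hh i hi]
      have hrel : ∑ i ∈ s, h i • v i = 0 := by
        rw [← smul_eq_zero_iff_right hπ, Finset.smul_sum, ← hg]
        refine Finset.sum_congr rfl fun i hi => ?_
        rw [smul_smul, mul_comm, hh i hi]
      intro i hi
      rw [pow_succ, ← hh i hi]
      exact Ideal.mul_mem_mul (ih s h hrel i hi) (Ideal.mem_span_singleton_self π)
  intro s g hg i hi
  have hbot := Ideal.iInf_pow_eq_bot_of_isDomain _ (hf ▸ RingHom.ker_ne_top f)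
  rw [← Ideal.mem_bot, ← hbot, Ideal.mem_iInf]
  exact fun n => mem_pow n s g hg i hi

end Residue

section FractionField
open Submodule Set
variable {R k M W : Type*} [CommRing R] [IsDomain R] [IsNoetherianRing R] [Field k]
  [AddCommGroup M] [Module R M] [AddCommGroup W] [Module k W]
variable {K V : Type*} [Field K] [Algebra R K] [IsFractionRing R K] [AddCommGroup V] [Module R V]
  [Module K V] [IsScalarTower R K V]

theorem finrank_span_range_semilinearMap_comp_le {J : Type*} [Finite J] {f : R →+* k} {π : R}
    (hf : RingHom.ker f = Ideal.span {π}) (ψ : M →ₛₗ[f] W) (φ : M →ₛₗ[algebraMap R K] V)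
    (hφ : Function.Injective φ) (v : J → M) :
    finrank k (span k (range (ψ ∘ v))) ≤ finrank K (span K (range (φ ∘ v))) := by
  let φR : M →ₗ[R] V :=
    { φ.toAddHom with map_smul' := fun r m => by simp [φ.map_smulₛₗ, algebraMap_smul] }
  have : Module.IsTorsionFree R V := .trans_faithfulSMul R K V
  have : Module.IsTorsionFree R M := hφ.moduleIsTorsionFree φR (map_smul φR)
  obtain ⟨κ, a, ha, hspan, hli⟩ := exists_linearIndependent' k (ψ ∘ v)
  have : Fintype κ := have := Finite.of_injective a ha; Fintype.ofFinite κ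
  have hliK : LinearIndependent K (φ ∘ v ∘ a) := (LinearIndependent.iff_fractionRing R K).mp
    ((hli.of_comp_of_ker_eq_span_singleton hf ψ).map' φR (LinearMap.ker_eq_bot.mpr hφ))
  calc finrank k (span k (range (ψ ∘ v)))
      = Fintype.card κ := by rw [← hspan]; exact finrank_span_eq_card hli
    _ = finrank K (span K (range (φ ∘ v ∘ a))) := (finrank_span_eq_card hliK).symm
    _ ≤ finrank K (span K (range (φ ∘ v))) :=
      have := FiniteDimensional.span_of_finite K (finite_range (φ ∘ v))
      Submodule.finrank_mono (span_mono (range_comp_subset_range a (φ ∘ v)))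

end FractionField

theorem RingHom.ext_of_adjoin_int_eq_top {A B : Type*} [Ring A] [Ring B] {s : Set A}
    (hs : Algebra.adjoin ℤ s = ⊤) {f g : A →+* B} (h : Set.EqOn f g s) : f = g := by
  have := AlgHom.ext_of_adjoin_eq_top hs (φ₁ := f.toIntAlgHom) (φ₂ := g.toIntAlgHom) h
  ext x
  exact AlgHom.congr_fun this x

theorem IsPrimitiveRoot.sub_one_dvd_prime {A : Type*} [CommRing A] [IsDomain A] {z : A} {p k : ℕ}
    (hp : p.Prime) (hk : k ≠ 0) (hz : IsPrimitiveRoot z (p ^ k)) : z - 1 ∣ (p : A) := by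
  have hpow : IsPrimitiveRoot (z ^ p ^ (k - 1)) p :=
    hz.pow (pow_pos hp.pos k) (by rw [← pow_succ, Nat.sub_one_add_one hk])
  have hdvd : z - 1 ∣ z ^ p ^ (k - 1) - 1 := by simpa using sub_dvd_pow_sub_pow z 1 (p ^ (k - 1))
  exact hdvd.trans (hpow.sub_one_dvd_natCast hp.one_lt)

theorem RingHom.ker_eq_span_sub_one {A : Type*} [CommRing A] {z : A} (hz : Algebra.adjoin ℤ {z} = ⊤)
    {p : ℕ} (hp : z - 1 ∣ (p : A)) (f : A →+* ZMod p) (hf : f z = 1) :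
    RingHom.ker f = Ideal.span {z - 1} := by
  refine le_antisymm (fun x hx => ?_) ?_
  · obtain ⟨g, rfl⟩ : ∃ g : ℤ[X], aeval z g = x := by
      rw [← AlgHom.mem_range, ← Algebra.adjoin_singleton_eq_range_aeval, hz]; trivial
    have hfg : f (aeval z g) = ((g.eval 1 : ℤ) : ZMod p) := by
      rw [aeval_def, hom_eval₂, hf, eval₂_at_one]
      simp
    have hdvd : z - 1 ∣ aeval z g - ((g.eval 1 : ℤ) : A) := by
      simpa [aeval_def, eval₂_eq_eval_map] using sub_dvd_eval_sub z 1 (g.map (Int.castRingHom A))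
    rw [RingHom.mem_ker, hfg, ZMod.intCast_zmod_eq_zero_iff_dvd] at hx
    obtain ⟨m, hm⟩ := hx
    rw [Ideal.mem_span_singleton, ← sub_add_cancel (aeval z g) ((g.eval 1 : ℤ) : A)]
    exact dvd_add hdvd (by rw [hm]; push_cast; exact hp.mul_right _)
  · rw [Ideal.span_le, Set.singleton_subset_iff]
    simp [hf]

theorem isFractionRing_adjoin_int {K : Type*} [Field K] [CharZero K] {x : K}
    (hx : Algebra.adjoin ℚ {x} = ⊤) : IsFractionRing (Algebra.adjoin ℤ {x}) K := by
  refine IsFractionRing.of_field _ K fun y => ?_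
  obtain ⟨g, rfl⟩ : ∃ g : ℚ[X], aeval x g = y := by
    rw [← AlgHom.mem_range, ← Algebra.adjoin_singleton_eq_range_aeval, hx]; trivial
  obtain ⟨b, hb, hgb⟩ := IsLocalization.integerNormalization_spec (nonZeroDivisors ℤ) g
  refine ⟨⟨aeval x (IsLocalization.integerNormalization (nonZeroDivisors ℤ) g),
    Polynomial.aeval_mem_adjoin_singleton ℤ x⟩, b, ?_⟩
  have hb0 : (b : K) ≠ 0 := Int.cast_ne_zero.mpr (nonZeroDivisors.ne_zero hb)
  rw [eq_div_iff (by simpa using hb0)]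
  calc aeval x g * b = b • aeval x g := by rw [zsmul_eq_mul, mul_comm]
    _ = aeval x (IsLocalization.integerNormalization (nonZeroDivisors ℤ) g) := by
      rw [← map_zsmul, ← hgb, aeval_map_algebraMap]

theorem Algebra.adjoin_singleton_self_eq_top {R A : Type*} [CommSemiring R] [Semiring A]
    [Algebra R A] (x : A) :
    Algebra.adjoin R {(⟨x, Algebra.self_mem_adjoin_singleton R x⟩ : Algebra.adjoin R {x})} = ⊤ := by
  convert Algebra.adjoin_adjoin_coe_preimage (R := R) (s := {x})
  ext
  simp [Subtype.ext_iff]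

section Tq
variable {R S : Type*} [CommRing R] [CommRing S] {ℓ : ℕ}

theorem TqMk_surjective : Function.Surjective (TqMk R ℓ) := Ideal.Quotient.mk_surjective

theorem TqMk_eq_zero_iff {g : R[X]} : TqMk R ℓ g = 0 ↔ (X - 1) ^ ℓ ∣ g :=
  Ideal.Quotient.eq_zero_iff_mem.trans Ideal.mem_span_singleton

theorem smul_eq_TqMk_C_mul (r : R) (y : Tq R ℓ) : r • y = TqMk R ℓ (C r) * y :=
  Algebra.smul_def r y

theorem apply_TqMk_eq_TqMk_map {f : Tq R ℓ →+* Tq S ℓ} {σ : R →+* S}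
    (hC : ∀ r, f (TqMk R ℓ (C r)) = TqMk S ℓ (C (σ r))) (hX : f (TqMk R ℓ X) = TqMk S ℓ X)
    (g : R[X]) : f (TqMk R ℓ g) = TqMk S ℓ (g.map σ) := by
  have h : f.comp (TqMk R ℓ) = (TqMk S ℓ).comp (mapRingHom σ) :=
    ringHom_ext (fun r => by simpa using hC r) (by simpa using hX)
  exact RingHom.congr_fun h g

theorem injective_of_apply_TqMk_eq_TqMk_map {f : Tq R ℓ →+* Tq S ℓ} {σ : R →+* S}
    (hσ : Function.Injective σ) (hf : ∀ g, f (TqMk R ℓ g) = TqMk S ℓ (g.map σ)) :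
    Function.Injective f := by
  refine (injective_iff_map_eq_zero f).mpr fun y hy => ?_
  obtain ⟨g, rfl⟩ := TqMk_surjective y
  have hmonic : ((X - 1 : R[X]) ^ ℓ).Monic := by simpa using (monic_X_sub_C (1 : R)).pow ℓ
  rw [hf, TqMk_eq_zero_iff] at hy
  rw [TqMk_eq_zero_iff, ← map_dvd_map σ hσ hmonic]
  simpa using hy

variable (ℓ) in
noncomputable def Tq.evalOne (hℓ : ℓ ≠ 0) : Tq R ℓ →+* R :=
  Ideal.Quotient.lift _ (evalRingHom 1) fun g hg => by
    obtain ⟨h, rfl⟩ := Ideal.mem_span_singleton'.mp hg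
    simp [zero_pow hℓ]

theorem Tq.evalOne_TqMk (hℓ : ℓ ≠ 0) (g : R[X]) : Tq.evalOne ℓ hℓ (TqMk R ℓ g) = g.eval 1 := rfl

variable (I : Type*) in
noncomputable def Tq.piSemilinearMap (f : Tq R ℓ →+* Tq S ℓ) {σ : R →+* S}
    (hC : ∀ r, f (TqMk R ℓ (C r)) = TqMk S ℓ (C (σ r))) :
    (I → Tq R ℓ) →ₛₗ[σ] (I → Tq S ℓ) where
  toFun y i := f (y i)
  map_add' _ _ := funext fun _ => map_add f _ _
  map_smul' r y := funext fun i => by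
    simp only [Pi.smul_apply, smul_eq_TqMk_C_mul, map_mul, hC]

theorem Tq.piSemilinearMap_injective {I : Type*} {f : Tq R ℓ →+* Tq S ℓ} {σ : R →+* S}
    (hC : ∀ r, f (TqMk R ℓ (C r)) = TqMk S ℓ (C (σ r))) (hf : Function.Injective f) :
    Function.Injective (Tq.piSemilinearMap I f hC) :=
  fun _ _ h => funext fun i => hf (congrFun h i)

theorem Tq.exists_ringHom_C_eq (hℓ : ℓ ≠ 0) {z : R} (hz : Algebra.adjoin ℤ {z} = ⊤) {c : S}
    (ψ : Tq R ℓ →+* Tq S ℓ) (hψ : ψ (TqMk R ℓ (C z)) = TqMk S ℓ (C c)) :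
    ∃ ψ₀ : R →+* S, ψ₀ z = c ∧ ∀ r, ψ (TqMk R ℓ (C r)) = TqMk S ℓ (C (ψ₀ r)) := by
  refine ⟨(Tq.evalOne ℓ hℓ).comp (ψ.comp ((TqMk R ℓ).comp C)), ?_, fun r => ?_⟩
  · simp [hψ, Tq.evalOne_TqMk]
  · have : ψ.comp ((TqMk R ℓ).comp C) =
        ((TqMk S ℓ).comp C).comp ((Tq.evalOne ℓ hℓ).comp (ψ.comp ((TqMk R ℓ).comp C))) :=
      RingHom.ext_of_adjoin_int_eq_top hz (by simp [hψ, Tq.evalOne_TqMk])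
    exact RingHom.congr_fun this r

end Tq

/- `K = ℚ(ζ)` is realized as a characteristic-zero field generated over `ℚ` by `ζ`, and `ℤ[ζ]` as
`Algebra.adjoin ℤ {ζ}`; `φ` is the canonical inclusion, pinned down by `hφC` and `hφX`. -/
theorem stmt9_general (p k ℓ : ℕ) [Fact p.Prime] (hk : 1 ≤ k) (hl : 1 ≤ ℓ)
    (K : Type) [Field K] [CharZero K] (ζ : K) (hζ : IsPrimitiveRoot ζ (p ^ k))
    (hK : Algebra.adjoin ℚ {ζ} = ⊤)
    (I J : Type) [Fintype J]
    (A : Matrix I J (Tq ↥(Algebra.adjoin ℤ {ζ}) ℓ))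
    (φ : Tq ↥(Algebra.adjoin ℤ {ζ}) ℓ →+* Tq K ℓ)
    (hφC : ∀ x : ↥(Algebra.adjoin ℤ {ζ}),
      φ (TqMk _ ℓ (Polynomial.C x)) = TqMk K ℓ (Polynomial.C (x : K)))
    (hφX : φ (TqMk _ ℓ Polynomial.X) = TqMk K ℓ Polynomial.X)
    (ψ : Tq ↥(Algebra.adjoin ℤ {ζ}) ℓ →+* Tq (ZMod p) ℓ)
    (hψζ : ψ (TqMk _ ℓ (Polynomial.C ⟨ζ, Algebra.subset_adjoin (Set.mem_singleton ζ)⟩)) = 1) :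
    colRank (ZMod p) (A.map ψ) ≤ colRank K (A.map φ) := by
  have : Algebra.FiniteType ℤ (Algebra.adjoin ℤ {ζ}) :=
    Algebra.FiniteType.adjoin_of_finite (Set.finite_singleton ζ)
  have : IsNoetherianRing (Algebra.adjoin ℤ {ζ}) := Algebra.FiniteType.isNoetherianRing ℤ _
  have : IsFractionRing (Algebra.adjoin ℤ {ζ}) K := isFractionRing_adjoin_int hK
  have hz := Algebra.adjoin_singleton_self_eq_top (R := ℤ) ζ
  obtain ⟨ψ₀, hψ₀ζ, hψ₀⟩ := Tq.exists_ringHom_C_eq (by omega) hz ψ (by rw [hψζ, C_1, map_one])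
  have hζ' : IsPrimitiveRoot (⟨ζ, Algebra.self_mem_adjoin_singleton ℤ ζ⟩ : Algebra.adjoin ℤ {ζ})
      (p ^ k) := .of_map_of_injective (f := (Algebra.adjoin ℤ {ζ}).val) hζ Subtype.coe_injective
  have hker := RingHom.ker_eq_span_sub_one hz (hζ'.sub_one_dvd_prime Fact.out (by omega)) ψ₀ hψ₀ζ
  have hφinj : Function.Injective φ :=
    injective_of_apply_TqMk_eq_TqMk_map (σ := algebraMap _ K) Subtype.coe_injective
      (apply_TqMk_eq_TqMk_map hφC hφX)
  exact finrank_span_range_semilinearMap_comp_le hker (Tq.piSemilinearMap I ψ hψ₀)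
    (Tq.piSemilinearMap I φ hφC) (Tq.piSemilinearMap_injective hφC hφinj) fun j i => A i j

theorem stmt9 (p k ℓ : ℕ) [Fact p.Prime] (hk : 1 ≤ k) (hl : 1 ≤ ℓ)
    (K : Type) [Field K] [CharZero K] (ζ : K) (hζ : IsPrimitiveRoot ζ (p ^ k))
    (hK : Algebra.adjoin ℚ {ζ} = ⊤)
    (I J : Type) [Fintype I] [Fintype J]
    (A : Matrix I J (Tq ↥(Algebra.adjoin ℤ {ζ}) ℓ))
    (φ : Tq ↥(Algebra.adjoin ℤ {ζ}) ℓ →+* Tq K ℓ)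
    (hφC : ∀ x : ↥(Algebra.adjoin ℤ {ζ}),
      φ (TqMk _ ℓ (Polynomial.C x)) = TqMk K ℓ (Polynomial.C (x : K)))
    (hφX : φ (TqMk _ ℓ Polynomial.X) = TqMk K ℓ Polynomial.X)
    (ψ : Tq ↥(Algebra.adjoin ℤ {ζ}) ℓ →+* Tq (ZMod p) ℓ)
    (hψζ : ψ (TqMk _ ℓ (Polynomial.C ⟨ζ, Algebra.subset_adjoin (Set.mem_singleton ζ)⟩)) = 1)
    (hψX : ψ (TqMk _ ℓ Polynomial.X) = TqMk (ZMod p) ℓ Polynomial.X) :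
    colRank (ZMod p) (A.map ψ) ≤ colRank K (A.map φ) :=
  stmt9_general p k ℓ hk hl K ζ hζ hK I J A φ hφC hφX ψ hψζ
end

section
/- Let p be a prime, k, ℓ, n ≥ 1 integers, ζ a primitive complex p^k-th root of unity. Let L = {a + λ·u : λ ∈ ℤ/p^kℤ} ⊆ (ℤ/p^kℤ)ⁿ be a line with a ∈ (ℤ/p^kℤ)ⁿ and u ∈ ℙ(ℤ/p^kℤ)^{n-1}, let u' ∈ ℤⁿ satisfy u' ≡ u (mod p^k), and let π : L → ℤ_{≥0} satisfy ∑_{x ∈ L} π(x) ≥ ℓ. Then there exist elements c_{λ,α} ∈ ℚ(ζ)[z] (depending on π, L, u') for λ ∈ ℤ/p^kℤ and α ∈ ℤ_{≥0}ⁿ with wt(α) < π(a + λu), such that for every polynomial f ∈ ℤ[x₁,…,x_n] the element ∑_{λ=0}^{p^k−1} ∑_{wt(α) < π(a+λu)} c_{λ,α} · f^{(α)}(ζ^{a+λu}) lies in ℤ[ζ][z]/⟨(z−1)^ℓ⟩ and ψ_{p^k} of it equals f(z^{u'}) = f(z^{u'_1},…,z^{u'_n}) in F_p[z]/⟨(z−1)^ℓ⟩.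 -/
/-!
The points `ζ^{a+λu}` lie on the curve `γ(z) = (ζ^{a_i} z^{e_i})_i`, at `z = ζ^λ`, where
`e_i ≥ 0` and `e_i ≡ u'_i` modulo `p^(k+ℓ)`. Let `M = ∏_λ (z - ζ^λ)^{π(λ)}`.
By Taylor's formula, if the Hasse derivatives of `f` of weight `< π(λ)` vanish at `ζ^{a+λu}`
for every `λ`, then `M ∣ f(γ)`. Hence over the field `ℚ(ζ)` the remainder `f(γ) mod M` is a
linear function of these derivatives, whose coefficients are the `c_{λ,α}`. As `M` is monic,
the same remainder can be computed over `ℤ[ζ]`, giving `E'`. Under `ψ`, `M` becomes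
`(z - 1)^{Σπ}`, which vanishes modulo `(z - 1)^ℓ`, and in characteristic `p` we have
`z^{p^(k+ℓ)} = 1` modulo `(z - 1)^ℓ`; so `ψ(E') = f(z^e) = f(z^{u'})`.
-/

/-- A vector in `(ℤ/p^kℤ)ⁿ` is primitive, i.e. represents a direction in
`ℙ(ℤ/p^kℤ)^{n-1}` (some coordinate is a unit). -/
def IsPrimitiveVec {N n : ℕ} (u : Fin n → ZMod N) : Prop :=
  ∃ v : Fin n → ZMod N, ∑ i, v i * u i = 1

/-- The `j`-th (multivariate) Hasse derivative of `Q`. -/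
noncomputable def mvHasseDeriv {F : Type*} [CommRing F] {n : ℕ} (j : Fin n →₀ ℕ)
    (Q : MvPolynomial (Fin n) F) : MvPolynomial (Fin n) F :=
  ∑ v ∈ Q.support, MvPolynomial.monomial (v - j)
    (Q.coeff v * ((∏ i, (v i).choose (j i) : ℕ) : F))

/-- The finite set of exponent vectors `α ∈ ℤ_{≥0}ⁿ` with `wt(α) < d`. -/
noncomputable def degLT (n d : ℕ) : Finset (Fin n →₀ ℕ) :=
  (Finset.Iic (Finsupp.equivFunOnFinite.symm fun _ : Fin n => d)).filter
    fun α => (α.sum fun _ e => e) < d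

/-- The ring `F_p[z]/⟨(z−1)^ℓ⟩`. -/
abbrev Tp (p ℓ : ℕ) : Type :=
  Polynomial (ZMod p) ⧸ Ideal.span {((Polynomial.X - 1) ^ ℓ : Polynomial (ZMod p))}

open Finset

theorem mem_degLT {n d : ℕ} {α : Fin n →₀ ℕ} : α ∈ degLT n d ↔ α.degree < d := by
  rw [degLT, mem_filter, mem_Iic]
  exact ⟨And.right, fun h => ⟨fun i => (Finsupp.le_degree i α).trans h.le, h⟩⟩

namespace MvPolynomial

variable {R S : Type*} [CommRing R] [CommRing S] {n : ℕ}

noncomputable def mvHasseDerivₗ (j : Fin n →₀ ℕ) :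
    MvPolynomial (Fin n) R →ₗ[R] MvPolynomial (Fin n) R :=
  (basisMonomials (Fin n) R).constr R
    fun v => monomial (v - j) ((∏ i, (v i).choose (j i) : ℕ) : R)

theorem mvHasseDerivₗ_apply (j : Fin n →₀ ℕ) (f : MvPolynomial (Fin n) R) :
    mvHasseDerivₗ j f = mvHasseDeriv j f := by
  rw [mvHasseDerivₗ, Module.Basis.constr_apply, mvHasseDeriv]
  simp [basisMonomials, sum_def, smul_monomial]

theorem mvHasseDeriv_add (j : Fin n →₀ ℕ) (f g : MvPolynomial (Fin n) R) :
    mvHasseDeriv j (f + g) = mvHasseDeriv j f + mvHasseDeriv j g := by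
  simp only [← mvHasseDerivₗ_apply, map_add]

theorem mvHasseDeriv_monomial (j v : Fin n →₀ ℕ) (c : R) :
    mvHasseDeriv j (monomial v c) =
      monomial (v - j) (c * ((∏ i, (v i).choose (j i) : ℕ) : R)) := by
  rw [← mvHasseDerivₗ_apply, mvHasseDerivₗ, Module.Basis.constr_apply]
  simp [basisMonomials, smul_monomial]

theorem mvHasseDeriv_map (φ : R →+* S) (j : Fin n →₀ ℕ) (f : MvPolynomial (Fin n) R) :
    mvHasseDeriv j (map φ f) = map φ (mvHasseDeriv j f) := by
  induction f using MvPolynomial.induction_on' with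
  | monomial v c => simp [mvHasseDeriv_monomial]
  | add f g hf hg => rw [map_add, mvHasseDeriv_add, mvHasseDeriv_add, hf, hg, map_add]

theorem X_add_C_pow {σ : Type*} (i : σ) (c : R) (m : ℕ) :
    (X i + C c) ^ m = ∑ t ∈ range (m + 1),
      monomial (Finsupp.single i t) ((m.choose t : R) * c ^ (m - t)) := by
  rw [add_pow]
  refine sum_congr rfl fun t _ => ?_
  rw [X_pow_eq_monomial, ← map_pow, ← map_natCast (C : R →+* MvPolynomial σ R), mul_assoc,
    ← map_mul, mul_comm, C_mul_monomial, mul_one, mul_comm (c ^ _)]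

theorem monomial_prod {σ ι : Type*} (s : Finset ι) (d : ι → σ →₀ ℕ) (c : ι → R) :
    ∏ i ∈ s, monomial (d i) (c i) = monomial (∑ i ∈ s, d i) (∏ i ∈ s, c i) := by
  rw [monomial_sum_index, map_prod, ← prod_mul_distrib]
  exact prod_congr rfl fun i _ => by rw [C_mul_monomial, mul_one]

theorem coeff_prod_X_add_C_pow {σ : Type*} [Fintype σ] [DecidableEq σ] (P : σ → R)
    (v α : σ →₀ ℕ) :
    coeff α (∏ i, (X i + C (P i)) ^ v i) =
      ∏ i, ((v i).choose (α i) : R) * P i ^ (v i - α i) := by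
  simp_rw [X_add_C_pow, prod_univ_sum, monomial_prod, coeff_sum, coeff_monomial]
  have hsum : ∀ x : σ → ℕ, ∑ i, Finsupp.single i (x i) = α ↔ x = ⇑α := fun x => by
    rw [← Finsupp.equivFunOnFinite_symm_eq_sum, Equiv.symm_apply_eq]; rfl
  simp_rw [hsum, sum_ite_eq', Fintype.mem_piFinset, mem_range, Nat.lt_succ_iff]
  split_ifs with hα
  · rfl
  · obtain ⟨i, hi⟩ := not_forall.mp hα
    rw [not_le] at hi
    refine (prod_eq_zero (mem_univ i) ?_).symm
    rw [Nat.choose_eq_zero_of_lt hi, Nat.cast_zero, zero_mul]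

theorem eval_mvHasseDeriv (P : Fin n → R) (α : Fin n →₀ ℕ) (f : MvPolynomial (Fin n) R) :
    eval P (mvHasseDeriv α f) = coeff α (bind₁ (fun i => X i + C (P i)) f) := by
  classical
  induction f using MvPolynomial.induction_on' with
  | monomial v c =>
    rw [mvHasseDeriv_monomial, eval_monomial, bind₁_monomial, coeff_C_mul,
      Finsupp.prod_fintype _ _ fun _ => pow_zero _,
      prod_subset (subset_univ v.support) fun i _ hi => by
        rw [Finsupp.notMem_support_iff.mp hi, pow_zero],
      coeff_prod_X_add_C_pow, Nat.cast_prod, mul_assoc, ← prod_mul_distrib]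
    rfl
  | add f g hf hg => rw [mvHasseDeriv_add, map_add, hf, hg, map_add, coeff_add]

theorem pow_dvd_aeval_of_coeff_eq_zero {σ R S : Type*} [CommSemiring R] [CommSemiring S]
    [Algebra R S] [Fintype σ] {d : S} {Q : σ → S} (hQ : ∀ i, d ∣ Q i) {m : ℕ}
    {g : MvPolynomial σ R} (hg : ∀ v : σ →₀ ℕ, v.degree < m → coeff v g = 0) :
    d ^ m ∣ aeval Q g := by
  rw [aeval_def, eval₂_eq']
  refine dvd_sum fun v hv => Dvd.dvd.mul_left ?_ _
  have hm : m ≤ v.degree := not_lt.mp fun h => mem_support_iff.mp hv (hg v h)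
  calc d ^ m ∣ d ^ v.degree := pow_dvd_pow d hm
    _ = ∏ i, d ^ v i := by rw [prod_pow_eq_pow_sum, Finsupp.degree_eq_sum]
    _ ∣ ∏ i, Q i ^ v i := prod_dvd_prod_of_dvd _ _ fun i _ => pow_dvd_pow_of_dvd (hQ i) _

theorem X_sub_C_pow_dvd_aeval {K : Type*} [CommRing K] {n m : ℕ} {r : K}
    {W : Fin n → Polynomial K} {P : Fin n → K} (hW : ∀ i, (W i).eval r = P i)
    {f : MvPolynomial (Fin n) K}
    (hf : ∀ α : Fin n →₀ ℕ, α.degree < m → eval P (mvHasseDeriv α f) = 0) :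
    (Polynomial.X - Polynomial.C r) ^ m ∣ aeval W f := by
  -- `f(W) = g(W - P)` for the Taylor shift `g = f(X + P)`, which has no monomials of degree `< m`,
  -- while `X - r` divides every `W i - P i`.
  have hshift : aeval W f =
      aeval (fun i => W i - Polynomial.C (P i)) (bind₁ (fun i => X i + C (P i)) f) := by
    rw [aeval_bind₁]
    congr 1
    ext1 i
    simp
  rw [hshift]
  refine pow_dvd_aeval_of_coeff_eq_zero (fun i => ?_) fun v hv => ?_
  · rw [Polynomial.dvd_iff_isRoot, Polynomial.IsRoot, Polynomial.eval_sub, Polynomial.eval_C,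
      hW, sub_self]
  · rw [← eval_mvHasseDeriv, hf v hv]

theorem prod_X_sub_C_pow_dvd_aeval {K ι : Type*} [Field K] [Fintype ι] {n : ℕ} {r : ι → K}
    (hr : Function.Injective r) (m : ι → ℕ) {W : Fin n → Polynomial K} {P : ι → Fin n → K}
    (hW : ∀ l i, (W i).eval (r l) = P l i) {f : MvPolynomial (Fin n) K}
    (hf : ∀ l, ∀ α ∈ degLT n (m l), eval (P l) (mvHasseDeriv α f) = 0) :
    ∏ l, (Polynomial.X - Polynomial.C (r l)) ^ m l ∣ aeval W f := by
  refine prod_dvd_of_coprime (fun l _ l' _ hne => ?_) fun l _ =>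
    X_sub_C_pow_dvd_aeval (hW l) fun α hα => hf l α (mem_degLT.mpr hα)
  exact ((Polynomial.pairwise_coprime_X_sub_C hr) hne).pow

-- Arbitrary `Algebra ℤ` instances, so that it also applies where the instance found is not
-- the canonical one (e.g. on polynomial rings).
theorem ringHom_aeval_int {σ A B : Type*} [CommRing A] [CommRing B] [Algebra ℤ A]
    [Algebra ℤ B] (φ : A →+* B) (x : σ → A) (f : MvPolynomial σ ℤ) :
    φ (aeval x f) = aeval (fun i => φ (x i)) f := by
  rw [map_aeval, RingHom.ext_int (φ.comp (algebraMap ℤ A)) (algebraMap ℤ B), coe_eval₂Hom,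
    ← aeval_def]

end MvPolynomial

theorem LinearMap.exists_comp_eq_of_ker_le {K V V' W : Type*} [Field K] [AddCommGroup V]
    [Module K V] [AddCommGroup V'] [Module K V'] [AddCommGroup W] [Module K W]
    (D : V →ₗ[K] V') (R : V →ₗ[K] W) (h : ker D ≤ ker R) :
    ∃ Φ : V' →ₗ[K] W, Φ ∘ₗ D = R := by
  obtain ⟨Φ, hΦ⟩ :=
    LinearMap.exists_extend ((ker D).liftQ R h ∘ₗ D.quotKerEquivRange.symm.toLinearMap)
  refine ⟨Φ, LinearMap.ext fun v => ?_⟩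
  have := LinearMap.congr_fun hΦ ⟨D v, mem_range_self D v⟩
  simpa [quotKerEquivRange_symm_apply_image] using this

theorem exists_eq_sum_smul_of_ker_le {K V W ι : Type*} [Field K] [AddCommGroup V]
    [Module K V] [AddCommGroup W] [Module K W] (s : Finset ι)
    (D : V →ₗ[K] ι → K) (R : V →ₗ[K] W) (h : ∀ v, (∀ i ∈ s, D v i = 0) → R v = 0) :
    ∃ c : ι → W, ∀ v, R v = ∑ i ∈ s, D v i • c i := by
  classical
  obtain ⟨Φ, hΦ⟩ := (LinearMap.funLeft K K ((↑) : s → ι) ∘ₗ D).exists_comp_eq_of_ker_le R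
    fun v hv => h v fun i hi => congrFun (LinearMap.mem_ker.mp hv) ⟨i, hi⟩
  refine ⟨fun i => if hi : i ∈ s then Φ fun j => if ⟨i, hi⟩ = j then 1 else 0 else 0,
    fun v => ?_⟩
  rw [← hΦ, LinearMap.comp_apply, LinearMap.pi_apply_eq_sum_univ, ← sum_coe_sort s]
  exact sum_congr rfl fun j _ => by simp

open Polynomial in
theorem exists_hermite_interpolation {K ι : Type*} [Field K] [Fintype ι] {n : ℕ} {r : ι → K}
    (hr : Function.Injective r) (m : ι → ℕ) {W : Fin n → K[X]} {P : ι → Fin n → K}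
    (hW : ∀ l i, (W i).eval (r l) = P l i) :
    ∃ c : ι → (Fin n →₀ ℕ) → K[X], ∀ f : MvPolynomial (Fin n) K,
      MvPolynomial.aeval W f %ₘ ∏ l, (X - C (r l)) ^ m l =
        ∑ l, ∑ α ∈ degLT n (m l), c l α * C (MvPolynomial.eval (P l) (mvHasseDeriv α f)) := by
  classical
  have hM : (∏ l, (X - C (r l)) ^ m l).Monic :=
    monic_prod_of_monic _ _ fun l _ => (monic_X_sub_C _).pow _
  let D : MvPolynomial (Fin n) K →ₗ[K] (Σ _ : ι, Fin n →₀ ℕ) → K :=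
    LinearMap.pi fun x => (MvPolynomial.aeval (P x.1)).toLinearMap ∘ₗ
      MvPolynomial.mvHasseDerivₗ x.2
  have hD : ∀ f x, D f x = MvPolynomial.eval (P x.1) (mvHasseDeriv x.2 f) := fun f x => by
    simp [D, MvPolynomial.mvHasseDerivₗ_apply]
  obtain ⟨c, hc⟩ := exists_eq_sum_smul_of_ker_le (univ.sigma fun l => degLT n (m l)) D
    (modByMonicHom (∏ l, (X - C (r l)) ^ m l) ∘ₗ (MvPolynomial.aeval W).toLinearMap)
    fun f hf => (modByMonic_eq_zero_iff_dvd hM).mpr <|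
      MvPolynomial.prod_X_sub_C_pow_dvd_aeval hr m hW fun l α hα => by
        rw [← hD f ⟨l, α⟩]
        exact hf ⟨l, α⟩ (mem_sigma.mpr ⟨mem_univ l, hα⟩)
  refine ⟨fun l α => c ⟨l, α⟩, fun f => ?_⟩
  rw [← modByMonicHom_apply, ← AlgHom.toLinearMap_apply, ← LinearMap.comp_apply, hc f, sum_sigma]
  exact sum_congr rfl fun l _ => sum_congr rfl fun α _ => by rw [hD, smul_eq_C_mul, mul_comm]

theorem pow_eq_pow_of_natCast_eq {M : Type*} [Monoid M] {x : M} {N : ℕ} (hx : x ^ N = 1)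
    {m m' : ℕ} (h : (m : ZMod N) = m') : x ^ m = x ^ m' := by
  rw [pow_eq_pow_mod m hx, pow_eq_pow_mod m' hx, (ZMod.natCast_eq_natCast_iff' m m' N).mp h]

theorem zpow_eq_pow_val_intCast {G : Type*} [Group G] {x : G} {N : ℕ} [NeZero N]
    (hx : x ^ N = 1) (m : ℤ) : x ^ m = x ^ (m : ZMod N).val := by
  rw [zpow_eq_zpow_emod' m hx, ← ZMod.val_intCast, zpow_natCast]

section LineCurve

open Polynomial

variable {R S : Type*} [CommRing R] [CommRing S] {N n : ℕ}

noncomputable def nodePoly [NeZero N] (ζ : R) (π : ZMod N → ℕ) : R[X] :=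
  ∏ l : ZMod N, (X - C (ζ ^ l.val)) ^ π l

noncomputable def lineCurve (ζ : R) (a : Fin n → ZMod N) (e : Fin n → ℕ) (i : Fin n) : R[X] :=
  C (ζ ^ (a i).val) * X ^ e i

noncomputable def lineRemainder [NeZero N] (ζ : R) (a : Fin n → ZMod N) (e : Fin n → ℕ)
    (π : ZMod N → ℕ) (f : MvPolynomial (Fin n) ℤ) : R[X] :=
  MvPolynomial.aeval (lineCurve ζ a e) f %ₘ nodePoly ζ π

theorem nodePoly_monic [NeZero N] (ζ : R) (π : ZMod N → ℕ) : (nodePoly ζ π).Monic :=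
  monic_prod_of_monic _ _ fun _ _ => (monic_X_sub_C _).pow _

theorem eval_lineCurve [NeZero N] {ζ : R} (hζ : ζ ^ N = 1) {a u : Fin n → ZMod N} {e : Fin n → ℕ}
    (he : ∀ i, (e i : ZMod N) = u i) (l : ZMod N) (i : Fin n) :
    (lineCurve ζ a e i).eval (ζ ^ l.val) = ζ ^ (a i + l * u i).val := by
  rw [lineCurve, eval_mul, eval_C, eval_pow, eval_X, ← pow_mul, ← pow_add]
  exact pow_eq_pow_of_natCast_eq hζ (by simp [he])

theorem map_nodePoly [NeZero N] (φ : R →+* S) (ζ : R) (π : ZMod N → ℕ) :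
    (nodePoly ζ π).map φ = nodePoly (φ ζ) π := by
  simp [nodePoly, Polynomial.map_prod]

theorem map_lineCurve (φ : R →+* S) (ζ : R) (a : Fin n → ZMod N) (e : Fin n → ℕ) (i : Fin n) :
    (lineCurve ζ a e i).map φ = lineCurve (φ ζ) a e i := by
  simp [lineCurve]

theorem map_lineRemainder [NeZero N] (φ : R →+* S) (ζ : R) (a : Fin n → ZMod N) (e : Fin n → ℕ)
    (π : ZMod N → ℕ) (f : MvPolynomial (Fin n) ℤ) :
    (lineRemainder ζ a e π f).map φ = lineRemainder (φ ζ) a e π f := by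
  rw [lineRemainder, map_modByMonic φ (nodePoly_monic ζ π), ← coe_mapRingHom,
    MvPolynomial.ringHom_aeval_int]
  simp only [coe_mapRingHom, map_lineCurve, map_nodePoly]
  rfl

-- `Subalgebra.subtype` carries the ring structure of the underlying subsemiring, against which
-- `map_lineRemainder` does not rewrite.
theorem map_subtype_lineRemainder [NeZero N] {A : Type*} [CommRing A] {T : Subalgebra ℤ A}
    (ζ : T) (a : Fin n → ZMod N) (e : Fin n → ℕ) (π : ZMod N → ℕ) (f : MvPolynomial (Fin n) ℤ) :
    (lineRemainder ζ a e π f).map T.subtype = lineRemainder (ζ : A) a e π f :=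
  map_lineRemainder T.val.toRingHom ζ a e π f

theorem exists_lineRemainder_eq_sum {K : Type*} [Field K] [NeZero N] {ζ : K}
    (hζ : IsPrimitiveRoot ζ N) {a u : Fin n → ZMod N} {e : Fin n → ℕ}
    (he : ∀ i, (e i : ZMod N) = u i) (π : ZMod N → ℕ) :
    ∃ c : ZMod N → (Fin n →₀ ℕ) → K[X], ∀ f : MvPolynomial (Fin n) ℤ,
      lineRemainder ζ a e π f = ∑ l, ∑ α ∈ degLT n (π l),
        c l α * C (MvPolynomial.aeval (fun i => ζ ^ (a i + l * u i).val) (mvHasseDeriv α f)) := by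
  obtain ⟨c, hc⟩ := exists_hermite_interpolation (r := fun l : ZMod N => ζ ^ l.val)
    (fun l l' h => ZMod.val_injective N (hζ.pow_inj (ZMod.val_lt l) (ZMod.val_lt l') h)) π
    (eval_lineCurve (a := a) hζ.pow_eq_one he)
  refine ⟨c, fun f => ?_⟩
  have h := hc (MvPolynomial.map (algebraMap ℤ K) f)
  rw [MvPolynomial.aeval_map_algebraMap] at h
  refine h.trans (sum_congr rfl fun l _ => sum_congr rfl fun α _ => ?_)
  rw [MvPolynomial.mvHasseDeriv_map, MvPolynomial.eval_map, ← MvPolynomial.aeval_def]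

open IntermediateField in
theorem exists_lineRemainder_eq_sum_adjoin {F L : Type*} [Field F] [Field L] [Algebra F L]
    [NeZero N] {ζ : L} (hζ : IsPrimitiveRoot ζ N) {a u : Fin n → ZMod N} {e : Fin n → ℕ}
    (he : ∀ i, (e i : ZMod N) = u i) (π : ZMod N → ℕ) :
    ∃ c : ZMod N → (Fin n →₀ ℕ) → F⟮ζ⟯[X], ∀ f : MvPolynomial (Fin n) ℤ,
      lineRemainder ζ a e π f = ∑ l, ∑ α ∈ degLT n (π l), (c l α).map (algebraMap F⟮ζ⟯ L) *
        C (MvPolynomial.aeval (fun i => ζ ^ (a i + l * u i).val) (mvHasseDeriv α f)) := by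
  obtain ⟨c, hc⟩ := exists_lineRemainder_eq_sum
    (IsPrimitiveRoot.coe_submonoidClass_iff.mp hζ : IsPrimitiveRoot (AdjoinSimple.gen F ζ) N)
    (a := a) he π
  refine ⟨c, fun f => ?_⟩
  have h := congrArg (Polynomial.map (algebraMap F⟮ζ⟯ L)) (hc f)
  simpa only [map_lineRemainder, Polynomial.map_sum, Polynomial.map_mul, Polynomial.map_C,
    MvPolynomial.ringHom_aeval_int (algebraMap F⟮ζ⟯ L), map_pow, AdjoinSimple.algebraMap_gen]
    using h

theorem mk_X_pow_eq_one {p ℓ J : ℕ} [Fact p.Prime] (h : ℓ ≤ p ^ J) :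
    (Ideal.Quotient.mk _ X : Tp p ℓ) ^ p ^ J = 1 := by
  rw [← map_pow, ← map_one (Ideal.Quotient.mk _), ← sub_eq_zero, ← map_sub,
    Ideal.Quotient.eq_zero_iff_mem, Ideal.mem_span_singleton,
    show (X : (ZMod p)[X]) ^ p ^ J - 1 = (X - 1) ^ p ^ J by rw [sub_pow_expChar_pow, one_pow]]
  exact pow_dvd_pow _ h

theorem coe_zpow_eq_mk_X_pow_val {p ℓ J : ℕ} [Fact p.Prime] (h : ℓ ≤ p ^ J) {z : (Tp p ℓ)ˣ}
    (hz : (z : Tp p ℓ) = Ideal.Quotient.mk _ X) (m : ℤ) :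
    ((z ^ m : (Tp p ℓ)ˣ) : Tp p ℓ) = Ideal.Quotient.mk _ X ^ (m : ZMod (p ^ J)).val := by
  have hz_pow : z ^ p ^ J = 1 :=
    Units.ext (by rw [Units.val_pow_eq_pow_val, hz, mk_X_pow_eq_one h, Units.val_one])
  rw [zpow_eq_pow_val_intCast hz_pow, Units.val_pow_eq_pow_val, hz]

theorem mk_map_lineRemainder [NeZero N] {p ℓ : ℕ} {ζ : R} (θ : R →+* ZMod p) (hθ : θ ζ = 1)
    (a : Fin n → ZMod N) (e : Fin n → ℕ) {π : ZMod N → ℕ} (hπ : ℓ ≤ ∑ l, π l)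
    (f : MvPolynomial (Fin n) ℤ) :
    (Ideal.Quotient.mk _ ((lineRemainder ζ a e π f).map θ) : Tp p ℓ) =
      MvPolynomial.aeval (fun i => Ideal.Quotient.mk _ X ^ e i) f := by
  have hnode : nodePoly (1 : ZMod p) π = (X - 1) ^ ∑ l, π l := by
    simp [nodePoly, prod_pow_eq_pow_sum]
  have hzero : (Ideal.Quotient.mk _ (nodePoly (1 : ZMod p) π) : Tp p ℓ) = 0 := by
    rw [hnode, Ideal.Quotient.eq_zero_iff_mem, Ideal.mem_span_singleton]
    exact pow_dvd_pow _ hπ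
  set q := MvPolynomial.aeval (lineCurve (1 : ZMod p) a e) f
  calc (Ideal.Quotient.mk _ ((lineRemainder ζ a e π f).map θ) : Tp p ℓ)
      = Ideal.Quotient.mk _ (q %ₘ nodePoly 1 π + nodePoly 1 π * (q /ₘ nodePoly 1 π)) := by
        rw [map_lineRemainder, hθ, map_add, map_mul, hzero, zero_mul, add_zero, lineRemainder]
    _ = MvPolynomial.aeval (fun i => Ideal.Quotient.mk _ X ^ e i) f := by
        rw [modByMonic_add_div, MvPolynomial.ringHom_aeval_int]
        simp [lineCurve]

end LineCurve

/- `π` is given on the parameter `λ` of the line `λ ↦ a + λ•u`. The coefficients `c λ α ∈ ℚ(ζ)[z]`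
are complex polynomials with coefficients in `Algebra.adjoin ℚ {ζ}`. That the sum lies in
`ℤ[ζ][z]/⟨(z−1)^ℓ⟩` is witnessed by a polynomial `E'` over `ℤ[ζ] = Algebra.adjoin ℤ {ζ}` agreeing
with it modulo `(z−1)^ℓ`; `ψ_{p^k}` acts coefficientwise as a `θ : ℤ[ζ] → F_p` with `θ(ζ) = 1`,
and `z` is the unit `zu` of `F_p[z]/⟨(z−1)^ℓ⟩`, so that the integer powers `z^{u'_i}` make sense. -/
theorem stmt14_general (p k ℓ n : ℕ) [Fact p.Prime] [NeZero (p ^ k)]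
    (ζ : ℂ) (hζ : IsPrimitiveRoot ζ (p ^ k))
    (a u : Fin n → ZMod (p ^ k))
    (u' : Fin n → ℤ) (hu' : ∀ i, ((u' i : ℤ) : ZMod (p ^ k)) = u i)
    (π : ZMod (p ^ k) → ℕ) (hπ : ℓ ≤ ∑ lam : ZMod (p ^ k), π lam) :
    ∃ c : ZMod (p ^ k) → (Fin n →₀ ℕ) → Polynomial ℂ,
      (∀ lam α j, (c lam α).coeff j ∈ (Algebra.adjoin ℚ {ζ} : Subalgebra ℚ ℂ)) ∧
      ∀ f : MvPolynomial (Fin n) ℤ,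
        ∃ E' : Polynomial ↥(Algebra.adjoin ℤ {ζ} : Subalgebra ℤ ℂ),
          ((Polynomial.X - 1) ^ ℓ ∣
            ((∑ lam : ZMod (p ^ k), ∑ α ∈ degLT n (π lam),
                c lam α * Polynomial.C (MvPolynomial.aeval
                  (fun i => ζ ^ ((a i + lam * u i).val)) (mvHasseDeriv α f)))
              - E'.map (Algebra.adjoin ℤ {ζ}).subtype)) ∧
          ∀ θ : ↥(Algebra.adjoin ℤ {ζ} : Subalgebra ℤ ℂ) →+* ZMod p,
            θ ⟨ζ, Algebra.subset_adjoin (Set.mem_singleton ζ)⟩ = 1 →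
            ∀ zu : (Tp p ℓ)ˣ,
              (zu : Tp p ℓ) = Ideal.Quotient.mk _ (Polynomial.X : Polynomial (ZMod p)) →
              Ideal.Quotient.mk _ (E'.map θ) =
                MvPolynomial.aeval (fun i => ((zu ^ (u' i) : (Tp p ℓ)ˣ) : Tp p ℓ)) f := by
  have hℓ : ℓ ≤ p ^ (k + ℓ) :=
    (ℓ.le_add_left k).trans (Nat.lt_pow_self (Fact.out : p.Prime).one_lt).le
  let e : Fin n → ℕ := fun i => (u' i : ZMod (p ^ (k + ℓ))).val
  have he : ∀ i, (e i : ZMod (p ^ k)) = u i := fun i => by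
    rw [ZMod.natCast_val, ZMod.cast_intCast (pow_dvd_pow p (k.le_add_right ℓ)), hu']
  obtain ⟨c, hc⟩ := exists_lineRemainder_eq_sum_adjoin (F := ℚ) hζ (a := a) he π
  refine ⟨fun l α => (c l α).map (algebraMap _ ℂ), fun l α j => ?_, fun f =>
    ⟨lineRemainder ⟨ζ, Algebra.self_mem_adjoin_singleton ℤ ζ⟩ a e π f, ?_, fun θ hθ zu hzu => ?_⟩⟩
  · rw [Polynomial.coeff_map, ← IntermediateField.adjoin_simple_toSubalgebra_of_isAlgebraic
      (hζ.isIntegral (NeZero.pos _)).tower_top.isAlgebraic]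
    exact ((c l α).coeff j).2
  · rw [map_subtype_lineRemainder, Subtype.coe_mk, hc f, sub_self]
    exact dvd_zero _
  · rw [mk_map_lineRemainder θ hθ a e hπ]
    exact congrArg (MvPolynomial.aeval · f)
      (funext fun i => (coe_zpow_eq_mk_X_pow_val hℓ hzu (u' i)).symm)

theorem stmt14 (p k ℓ n : ℕ) [Fact p.Prime] [NeZero (p ^ k)]
    (hk : 1 ≤ k) (hl : 1 ≤ ℓ) (hn : 1 ≤ n)
    (ζ : ℂ) (hζ : IsPrimitiveRoot ζ (p ^ k))
    (a u : Fin n → ZMod (p ^ k)) (hu : IsPrimitiveVec u)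
    (u' : Fin n → ℤ) (hu' : ∀ i, ((u' i : ℤ) : ZMod (p ^ k)) = u i)
    (π : ZMod (p ^ k) → ℕ) (hπ : ℓ ≤ ∑ lam : ZMod (p ^ k), π lam) :
    ∃ c : ZMod (p ^ k) → (Fin n →₀ ℕ) → Polynomial ℂ,
      (∀ lam α j, (c lam α).coeff j ∈ (Algebra.adjoin ℚ {ζ} : Subalgebra ℚ ℂ)) ∧
      ∀ f : MvPolynomial (Fin n) ℤ,
        ∃ E' : Polynomial ↥(Algebra.adjoin ℤ {ζ} : Subalgebra ℤ ℂ),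
          ((Polynomial.X - 1) ^ ℓ ∣
            ((∑ lam : ZMod (p ^ k), ∑ α ∈ degLT n (π lam),
                c lam α * Polynomial.C (MvPolynomial.aeval
                  (fun i => ζ ^ ((a i + lam * u i).val)) (mvHasseDeriv α f)))
              - E'.map (Algebra.adjoin ℤ {ζ}).subtype)) ∧
          ∀ θ : ↥(Algebra.adjoin ℤ {ζ} : Subalgebra ℤ ℂ) →+* ZMod p,
            θ ⟨ζ, Algebra.subset_adjoin (Set.mem_singleton ζ)⟩ = 1 →
            ∀ zu : (Tp p ℓ)ˣ,
              (zu : Tp p ℓ) = Ideal.Quotient.mk _ (Polynomial.X : Polynomial (ZMod p)) →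
              Ideal.Quotient.mk _ (E'.map θ) =
                MvPolynomial.aeval (fun i => ((zu ^ (u' i) : (Tp p ℓ)ˣ) : Tp p ℓ)) f :=
  stmt14_general p k ℓ n ζ hζ a u u' hu' π hπ
end

section
/- Let n, w ≥ 1 be integers and let b₁ ≥ b₂ ≥ ··· ≥ b_w ≥ 0 be a nonincreasing sequence of nonnegative integers. Then ∑_{i=1}^{w} b_iⁿ · (iⁿ − (i−1)ⁿ) ≥ ( (∑_{i=1}^{w} b_i) / (log(w) + 1) )ⁿ, where log denotes the natural logarithm. -/
/-!
Let `L` be the left-hand side. Since `b` is nonincreasing, for each `i` the first `i` terms give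
`L ≥ b_i ^ n * ∑_{j ≤ i} (j ^ n - (j - 1) ^ n) = (i b_i) ^ n`, so `i b_i ≤ M := L ^ (1 / n)`.
Hence `b_i ≤ M / i`, and summing against the harmonic bound `H_w ≤ log w + 1` gives
`∑ b_i ≤ M (log w + 1)`, i.e. the claim after raising to the `n`-th power.
-/

open Finset Real

lemma sum_Icc_pow_sub_pow_sub_one {n : ℕ} (hn : n ≠ 0) (i : ℕ) :
    ∑ j ∈ Icc 1 i, ((j : ℝ) ^ n - ((j : ℝ) - 1) ^ n) = (i : ℝ) ^ n := by
  induction i with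
  | zero => simp [zero_pow hn]
  | succ k ih =>
    rw [sum_Icc_succ_top (by omega), ih]
    push_cast
    ring

lemma pow_sub_pow_sub_one_nonneg {x : ℝ} (hx : 1 ≤ x) (n : ℕ) : 0 ≤ x ^ n - (x - 1) ^ n :=
  sub_nonneg.mpr (pow_le_pow_left₀ (by linarith) (by linarith) n)

lemma mul_pow_le_sum_pow_mul_pow_sub_pow {n w : ℕ} (hn : n ≠ 0) {b : ℕ → ℝ}
    (hb₀ : ∀ j ∈ Icc 1 w, 0 ≤ b j) (hb : AntitoneOn b (Icc 1 w)) {i : ℕ} (hi : i ∈ Icc 1 w) :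
    (b i * i) ^ n ≤ ∑ j ∈ Icc 1 w, b j ^ n * ((j : ℝ) ^ n - ((j : ℝ) - 1) ^ n) := by
  have hIcc : Icc 1 i ⊆ Icc 1 w := Icc_subset_Icc_right (mem_Icc.mp hi).2
  have hdiff : ∀ j ∈ Icc 1 w, 0 ≤ (j : ℝ) ^ n - ((j : ℝ) - 1) ^ n := fun j hj =>
    pow_sub_pow_sub_one_nonneg (by exact_mod_cast (mem_Icc.mp hj).1) n
  calc (b i * i) ^ n = ∑ j ∈ Icc 1 i, b i ^ n * ((j : ℝ) ^ n - ((j : ℝ) - 1) ^ n) := by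
        rw [← mul_sum, sum_Icc_pow_sub_pow_sub_one hn, mul_pow]
    _ ≤ ∑ j ∈ Icc 1 i, b j ^ n * ((j : ℝ) ^ n - ((j : ℝ) - 1) ^ n) := by
        refine sum_le_sum fun j hj => mul_le_mul_of_nonneg_right ?_ (hdiff j (hIcc hj))
        exact pow_le_pow_left₀ (hb₀ i hi) (hb (hIcc hj) hi (mem_Icc.mp hj).2) n
    _ ≤ ∑ j ∈ Icc 1 w, b j ^ n * ((j : ℝ) ^ n - ((j : ℝ) - 1) ^ n) :=
        sum_le_sum_of_subset_of_nonneg hIcc fun j hj _ =>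
          mul_nonneg (pow_nonneg (hb₀ j hj) n) (hdiff j hj)

lemma sum_Icc_le_mul_log_add_one {w : ℕ} {a : ℕ → ℝ} {M : ℝ} (hM : 0 ≤ M)
    (h : ∀ i ∈ Icc 1 w, a i * i ≤ M) : ∑ i ∈ Icc 1 w, a i ≤ M * (log w + 1) :=
  calc ∑ i ∈ Icc 1 w, a i ≤ ∑ i ∈ Icc 1 w, M * (i : ℝ)⁻¹ := by
        refine sum_le_sum fun i hi => ?_
        have hi₀ : (0 : ℝ) < i := by exact_mod_cast (mem_Icc.mp hi).1
        rw [← div_eq_mul_inv, le_div_iff₀ hi₀]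
        exact h i hi
    _ = M * harmonic w := by
        rw [← mul_sum, harmonic_eq_sum_Icc]
        push_cast
        rfl
    _ ≤ M * (log w + 1) := by
        rw [add_comm]
        exact mul_le_mul_of_nonneg_left (harmonic_le_one_add_log w) hM

theorem stmt15_general (n w : ℕ) (hn : 1 ≤ n) (b : ℕ → ℕ)
    (hmono : ∀ i j : ℕ, 1 ≤ i → i ≤ j → j ≤ w → b j ≤ b i) :
    ∑ i ∈ Finset.Icc 1 w, (b i : ℝ) ^ n * ((i : ℝ) ^ n - ((i : ℝ) - 1) ^ n) ≥
      ((∑ i ∈ Finset.Icc 1 w, (b i : ℝ)) / (Real.log w + 1)) ^ n := by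
  have hn₀ : n ≠ 0 := by omega
  set L := ∑ i ∈ Icc 1 w, (b i : ℝ) ^ n * ((i : ℝ) ^ n - ((i : ℝ) - 1) ^ n)
  have hanti : AntitoneOn (fun i => (b i : ℝ)) (Icc 1 w) := fun i hi j hj hij =>
    Nat.cast_le.mpr (hmono i j (mem_Icc.mp hi).1 hij (mem_Icc.mp hj).2)
  have hterm : ∀ i ∈ Icc 1 w, ((b i : ℝ) * i) ^ n ≤ L := fun i hi =>
    mul_pow_le_sum_pow_mul_pow_sub_pow hn₀ (fun j _ => Nat.cast_nonneg _) hanti hi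
  have hL : 0 ≤ L := sum_nonneg fun i hi => mul_nonneg (by positivity)
    (pow_sub_pow_sub_one_nonneg (by exact_mod_cast (mem_Icc.mp hi).1) n)
  set M := L ^ (n⁻¹ : ℝ)
  have hM : 0 ≤ M := rpow_nonneg hL _
  have hMn : M ^ n = L := rpow_inv_natCast_pow hL hn₀
  have hbound : ∀ i ∈ Icc 1 w, (b i : ℝ) * i ≤ M := fun i hi =>
    (pow_le_pow_iff_left₀ (by positivity) hM hn₀).mp (hMn ▸ hterm i hi)
  have hlog : 0 < log w + 1 := by linarith [log_natCast_nonneg w]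
  rw [ge_iff_le, ← hMn]
  refine pow_le_pow_left₀ (by positivity) ?_ n
  rw [div_le_iff₀ hlog]
  exact sum_Icc_le_mul_log_add_one hM hbound

theorem stmt15 (n w : ℕ) (hn : 1 ≤ n) (hw : 1 ≤ w) (b : ℕ → ℕ)
    (hmono : ∀ i j : ℕ, 1 ≤ i → i ≤ j → j ≤ w → b j ≤ b i) :
    ∑ i ∈ Finset.Icc 1 w, (b i : ℝ) ^ n * ((i : ℝ) ^ n - ((i : ℝ) - 1) ^ n) ≥
      ((∑ i ∈ Finset.Icc 1 w, (b i : ℝ)) / (Real.log w + 1)) ^ n :=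
  stmt15_general n w hn b hmono
end

section
/- Let m ≥ 1 be an integer and let V_m be the m × m matrix over ℤ[z] with rows and columns indexed by {0,…,m−1} whose (i,j) entry is z^{i·j}. Then there exist an m × m lower triangular matrix L_m over ℤ[z] with all diagonal entries equal to 1, whose inverse exists and is also lower triangular with entries in ℤ[z] and all diagonal entries equal to 1, and an m × m upper triangular matrix D_m over ℤ[z] whose j-th diagonal entry is D_m(j,j) = ∏_{i=0}^{j-1} (z^j − z^i) for j ∈ {0,…,m−1}, such that V_m = L_m · D_m. -/
/-!
The Gaussian binomial coefficients `[n k]_q` satisfy the `q`-analogue of the expansion of a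
power in falling factorials, `x ^ n = ∑ₖ [n k]_q (x - 1)(x - q) ⋯ (x - q ^ (k - 1))`: with
`P k = (x - 1) ⋯ (x - q ^ (k - 1))` one has `x P k = P (k + 1) + q ^ k P k`, so multiplying by `x`
reproduces the `q`-Pascal rule. Taking `q = z` and `x = z ^ j` gives
`z ^ (i j) = ∑ₖ [i k]_z ∏_{l < k} (z ^ j - z ^ l)`, so `V_m = L_m D_m` with `L_m = ([i k]_z)`,
lower unitriangular and hence invertible over `ℤ[z]`, and
`D_m = (∏_{l < k} (z ^ j - z ^ l))_{k j}`, upper triangular because the factor `l = j`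
vanishes when `j < k`.
-/

open Finset Matrix Polynomial

section GaussianBinomial

variable {R : Type*} [CommSemiring R]

def gaussBinomial (q : R) : ℕ → ℕ → R
  | _, 0 => 1
  | 0, _ + 1 => 0
  | n + 1, k + 1 => gaussBinomial q n k + q ^ (k + 1) * gaussBinomial q n (k + 1)

@[simp]
theorem gaussBinomial_zero_right (q : R) (n : ℕ) : gaussBinomial q n 0 = 1 := by
  cases n <;> rfl

theorem gaussBinomial_succ_succ (q : R) (n k : ℕ) :
    gaussBinomial q (n + 1) (k + 1) =
      gaussBinomial q n k + q ^ (k + 1) * gaussBinomial q n (k + 1) :=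
  rfl

theorem gaussBinomial_eq_zero_of_lt (q : R) : ∀ {n k : ℕ}, n < k → gaussBinomial q n k = 0
  | 0, _ + 1, _ => rfl
  | n + 1, k + 1, h => by
    rw [gaussBinomial_succ_succ, gaussBinomial_eq_zero_of_lt q (by omega),
      gaussBinomial_eq_zero_of_lt q (by omega), mul_zero, add_zero]

theorem gaussBinomial_self (q : R) : ∀ n : ℕ, gaussBinomial q n n = 1
  | 0 => rfl
  | n + 1 => by
    rw [gaussBinomial_succ_succ, gaussBinomial_self q n,
      gaussBinomial_eq_zero_of_lt q n.lt_succ_self, mul_zero, add_zero]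

end GaussianBinomial

section QFalling

variable {R : Type*} [CommRing R]

theorem mul_prod_range_sub_pow (q x : R) (k : ℕ) :
    x * ∏ l ∈ range k, (x - q ^ l) =
      ∏ l ∈ range (k + 1), (x - q ^ l) + q ^ k * ∏ l ∈ range k, (x - q ^ l) := by
  rw [prod_range_succ]
  ring

theorem pow_eq_sum_gaussBinomial_mul_prod (q x : R) {n N : ℕ} (hn : n < N) :
    x ^ n = ∑ k ∈ range N, gaussBinomial q n k * ∏ l ∈ range k, (x - q ^ l) := by
  induction n generalizing N with
  | zero =>
    rw [sum_eq_single_of_mem 0 (mem_range.2 hn)]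
    · simp
    · intro k _ hk
      rw [gaussBinomial_eq_zero_of_lt q (Nat.pos_of_ne_zero hk), zero_mul]
  | succ n ih =>
    obtain ⟨N, rfl⟩ : ∃ N', N = N' + 1 := ⟨N - 1, by omega⟩
    set P : ℕ → R := fun k => ∏ l ∈ range k, (x - q ^ l)
    set g : ℕ → R := fun k => q ^ k * (gaussBinomial q n k * P k)
    have hshift : ∑ k ∈ range N, g k = 1 + ∑ k ∈ range N, g (k + 1) := by
      have hgN : g N = 0 := by simp [g, gaussBinomial_eq_zero_of_lt q (show n < N by omega)]
      rw [← add_zero (∑ k ∈ range N, g k), ← hgN, ← sum_range_succ, sum_range_succ']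
      simp [g, P, add_comm]
    calc x ^ (n + 1) = x * ∑ k ∈ range N, gaussBinomial q n k * P k := by
          rw [pow_succ', ih (show n < N by omega)]
      _ = ∑ k ∈ range N, gaussBinomial q n k * P (k + 1) + ∑ k ∈ range N, g k := by
          rw [mul_sum, ← sum_add_distrib]
          refine sum_congr rfl fun k _ => ?_
          simp only [g, P, mul_left_comm x, mul_prod_range_sub_pow]
          ring
      _ = ∑ k ∈ range (N + 1), gaussBinomial q (n + 1) k * P k := by
          rw [hshift, sum_range_succ']
          simp only [g, gaussBinomial_succ_succ, gaussBinomial_zero_right, P, prod_range_zero,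
            mul_one]
          rw [add_left_comm, ← sum_add_distrib]
          simp only [add_mul, mul_assoc, add_comm]

end QFalling

namespace Matrix

def IsLowerUnitriangular {n R : Type*} [LT n] [Zero R] [One R] (L : Matrix n n R) : Prop :=
  L.IsLowerTriangular ∧ ∀ i, L i i = 1

variable {n R : Type*} [Fintype n] [LinearOrder n]

theorem IsLowerTriangular.mul_apply_self [NonUnitalNonAssocSemiring R] {A B : Matrix n n R}
    (hA : A.IsLowerTriangular) (hB : B.IsLowerTriangular) (i : n) :
    (A * B) i i = A i i * B i i := by
  rw [mul_apply, sum_eq_single i]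
  · intro k _ hki
    rcases lt_or_gt_of_ne hki with hk | hk
    · rw [hB hk, mul_zero]
    · rw [hA hk, zero_mul]
  · exact fun h => absurd (mem_univ i) h

variable [CommRing R] {L : Matrix n n R}

theorem IsLowerUnitriangular.det_eq_one (hL : L.IsLowerUnitriangular) : L.det = 1 := by
  rw [det_of_isLowerTriangular L hL.1]
  simp [hL.2]

theorem IsLowerUnitriangular.isUnit_det (hL : L.IsLowerUnitriangular) : IsUnit L.det := by
  rw [hL.det_eq_one]
  exact isUnit_one

theorem IsLowerUnitriangular.inv (hL : L.IsLowerUnitriangular) : L⁻¹.IsLowerUnitriangular := by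
  have : Invertible L := L.invertibleOfIsUnitDet hL.isUnit_det
  have hinv : L⁻¹.IsLowerTriangular := blockTriangular_inv_of_blockTriangular hL.1
  refine ⟨hinv, fun i => ?_⟩
  have hii := congrFun (congrFun (inv_mul_of_invertible L) i) i
  rwa [hinv.mul_apply_self hL.1, hL.2, mul_one, one_apply_eq] at hii

end Matrix

theorem stmt18_general (m : ℕ) :
    ∃ L Linv D : Matrix (Fin m) (Fin m) (Polynomial ℤ),
      L * Linv = 1 ∧ Linv * L = 1 ∧
      (∀ i j : Fin m, i < j → L i j = 0) ∧ (∀ i : Fin m, L i i = 1) ∧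
      (∀ i j : Fin m, i < j → Linv i j = 0) ∧ (∀ i : Fin m, Linv i i = 1) ∧
      (∀ i j : Fin m, j < i → D i j = 0) ∧
      (∀ j : Fin m, D j j =
        ∏ i ∈ Finset.range (j : ℕ), ((Polynomial.X : Polynomial ℤ) ^ (j : ℕ) - Polynomial.X ^ i)) ∧
      (Matrix.of fun i j : Fin m => (Polynomial.X : Polynomial ℤ) ^ ((i : ℕ) * (j : ℕ)))
        = L * D := by
  set L : Matrix (Fin m) (Fin m) ℤ[X] := of fun i k => gaussBinomial X (i : ℕ) k
  have hL : L.IsLowerUnitriangular :=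
    ⟨fun _ _ h => gaussBinomial_eq_zero_of_lt X h, fun i => gaussBinomial_self X i⟩
  refine ⟨L, L⁻¹, of fun k j => ∏ l ∈ range (k : ℕ), (X ^ (j : ℕ) - X ^ l),
    mul_nonsing_inv L hL.isUnit_det, nonsing_inv_mul L hL.isUnit_det, fun _ _ h => hL.1 h, hL.2,
    fun _ _ h => hL.inv.1 h, hL.inv.2, fun k j h => prod_eq_zero (mem_range.2 h) (sub_self _),
    fun _ => rfl, ?_⟩
  refine Matrix.ext fun i j => ?_
  change X ^ ((i : ℕ) * j) =
    ∑ k : Fin m, gaussBinomial X (i : ℕ) k * ∏ l ∈ range k, (X ^ (j : ℕ) - X ^ l)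
  rw [Fin.sum_univ_eq_sum_range
      (fun k => gaussBinomial X (i : ℕ) k * ∏ l ∈ range k, (X ^ (j : ℕ) - X ^ l)) m,
    mul_comm, pow_mul]
  exact pow_eq_sum_gaussBinomial_mul_prod X _ i.isLt

theorem stmt18 (m : ℕ) (hm : 1 ≤ m) :
    ∃ L Linv D : Matrix (Fin m) (Fin m) (Polynomial ℤ),
      L * Linv = 1 ∧ Linv * L = 1 ∧
      (∀ i j : Fin m, i < j → L i j = 0) ∧ (∀ i : Fin m, L i i = 1) ∧
      (∀ i j : Fin m, i < j → Linv i j = 0) ∧ (∀ i : Fin m, Linv i i = 1) ∧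
      (∀ i j : Fin m, j < i → D i j = 0) ∧
      (∀ j : Fin m, D j j =
        ∏ i ∈ Finset.range (j : ℕ), ((Polynomial.X : Polynomial ℤ) ^ (j : ℕ) - Polynomial.X ^ i)) ∧
      (Matrix.of fun i j : Fin m => (Polynomial.X : Polynomial ℤ) ^ ((i : ℕ) * (j : ℕ)))
        = L * D :=
  stmt18_general m
end
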